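/- arXiv:1901.05998 — 6 statements merged into one kernel-verified Lean document; each statement's English description precedes it below -/
import Mathlib

section
/- Fix an integer J ≥ 2. For every refinement instance (job sizes ξ_1, …, ξ_N ∈ (2^{-J}, 1] and queue counts Q^X_1, …, Q^X_N ∈ ℤ_{≥0}) and every feasible configuration k^X ∈ ℤ_{≥0}^N (i.e. Σ_{i=1}^N k^X_i ξ_i ≤ 1), there exists a configuration k ∈ K_RED such that ⟨k, Q⟩ ≥ (2/3) · Σ_{i=1}^N k^X_i Q^X_i, where Q_j = Σ_{i: ξ_i ∈ I_j} Q^X_i for j = 0, …, 2J−1. -/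
attribute [local instance] Classical.propDecidable

/-- Membership in the interval `I j` of partition `I`:
`I (2*m) = ((2/3)·2⁻ᵐ, 2⁻ᵐ]` and `I (2*m+1) = ((1/2)·2⁻ᵐ, (2/3)·2⁻ᵐ]`. -/
def memI (j : ℕ) (x : ℝ) : Prop :=
  if j % 2 = 0 then (2/3) * (1/2)^(j/2) < x ∧ x ≤ (1/2)^(j/2)
  else (1/2) * (1/2)^(j/2) < x ∧ x ≤ (2/3) * (1/2)^(j/2)

/-- The reduced configuration set `K_RED`, as functions `ℕ → ℕ` supported on `{0, …, 2J-1}`. -/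
def KRED (J : ℕ) : Set (ℕ → ℕ) :=
  {k | (∃ m < J, k = fun i => if i = 2*m then 2^m else 0)
     ∨ (∃ m, 1 ≤ m ∧ m < J ∧ k = fun i => if i = 2*m+1 then 3 * 2^(m-1) else 0)
     ∨ (∃ m, 2 ≤ m ∧ m < J ∧ k = fun i => if i = 1 then 1 else if i = 2*m then 2^m / 3 else 0)
     ∨ (∃ m, 1 ≤ m ∧ m < J ∧ k = fun i => if i = 1 then 1 else if i = 2*m+1 then 2^(m-1) else 0)}

/-- The aggregated virtual-queue sizes: `Q j = Σ_{i : ξ i ∈ I j} QX i`. -/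
noncomputable def Qagg {N : ℕ} (ξ : Fin N → ℝ) (QX : Fin N → ℕ) (j : ℕ) : ℕ :=
  ∑ i, if memI j (ξ i) then QX i else 0

/-- upper endpoint of interval `I j` -/
noncomputable def Ubd (j : ℕ) : ℝ :=
  if j % 2 = 0 then (1/2)^(j/2) else (2/3) * (1/2)^(j/2)

lemma Ubd_pos (j : ℕ) : 0 < Ubd j := by
  unfold Ubd; split <;> positivity

lemma Ubd_succ_lt (j : ℕ) : Ubd (j+1) < Ubd j := by
  have hp : (0:ℝ) < (1/2)^(j/2) := by positivity
  rcases Nat.even_or_odd j with ⟨t, ht⟩ | ⟨t, ht⟩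
  · subst ht
    unfold Ubd
    rw [show (t+t) % 2 = 0 from by omega, show (t+t+1) % 2 = 1 from by omega,
      show (t+t+1)/2 = t from by omega, show (t+t)/2 = t from by omega]
    norm_num
  · subst ht
    unfold Ubd
    rw [show (2*t+1) % 2 = 1 from by omega, show (2*t+1+1) % 2 = 0 from by omega,
      show (2*t+1+1)/2 = t+1 from by omega, show (2*t+1)/2 = t from by omega]
    norm_num
    rw [pow_succ]
    nlinarith [pow_pos (show (0:ℝ) < 1/2 by norm_num) t]

lemma Ubd_anti : StrictAnti Ubd := strictAnti_nat_of_succ_lt Ubd_succ_lt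

lemma memI_iff (j : ℕ) (x : ℝ) : memI j x ↔ Ubd (j+1) < x ∧ x ≤ Ubd j := by
  rcases Nat.even_or_odd j with ⟨t, ht⟩ | ⟨t, ht⟩
  · subst ht
    unfold memI Ubd
    rw [show (t+t) % 2 = 0 from by omega, show (t+t+1) % 2 = 1 from by omega,
      show (t+t+1)/2 = t from by omega, show (t+t)/2 = t from by omega]
    norm_num
  · subst ht
    unfold memI Ubd
    rw [show (2*t+1) % 2 = 1 from by omega, show (2*t+1+1) % 2 = 0 from by omega,
      show (2*t+1+1)/2 = t+1 from by omega, show (2*t+1)/2 = t from by omega]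
    rw [pow_succ, mul_comm ((1/2:ℝ)^t) (1/2)]
    norm_num

lemma memI_lb {j : ℕ} {x : ℝ} (h : memI j x) : Ubd (j+1) < x := ((memI_iff j x).1 h).1

lemma memI_unique {j j' : ℕ} {x : ℝ} (h : memI j x) (h' : memI j' x) : j = j' := by
  have aux : ∀ a b : ℕ, a < b → memI a x → memI b x → False := by
    intro a b hab ha hb
    have h1 := ((memI_iff a x).1 ha).1
    have h2 := ((memI_iff b x).1 hb).2
    have h3 : Ubd b ≤ Ubd (a+1) := Ubd_anti.antitone (by omega)
    linarith
  rcases lt_trichotomy j j' with h1 | h1 | h1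
  · exact absurd (aux j j' h1 h h') (by simp)
  · exact h1
  · exact absurd (aux j' j h1 h' h) (by simp)

lemma exists_dyadic {x : ℝ} (J : ℕ) (h1 : (1/2:ℝ)^J < x) (h2 : x ≤ 1) :
    ∃ m < J, (1/2:ℝ)^(m+1) < x ∧ x ≤ (1/2)^m := by
  induction J with
  | zero => norm_num at h1; linarith
  | succ J ih =>
    by_cases hc : (1/2:ℝ)^J < x
    · obtain ⟨m, hm, h⟩ := ih hc
      exact ⟨m, by omega, h⟩
    · push_neg at hc
      exact ⟨J, by omega, h1, hc⟩

lemma exists_memI {x : ℝ} {J : ℕ} (h1 : (1/2:ℝ)^J < x) (h2 : x ≤ 1) :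
    ∃ j, j < 2*J ∧ memI j x := by
  obtain ⟨m, hm, hl, hu⟩ := exists_dyadic J h1 h2
  by_cases hc : (2/3) * (1/2:ℝ)^m < x
  · refine ⟨2*m, by omega, ?_⟩
    unfold memI
    rw [show (2*m) % 2 = 0 from by omega, show (2*m)/2 = m from by omega]
    norm_num
    exact ⟨hc, hu⟩
  · refine ⟨2*m+1, by omega, ?_⟩
    unfold memI
    rw [show (2*m+1) % 2 = 1 from by omega, show (2*m+1)/2 = m from by omega]
    norm_num
    push_neg at hc
    refine ⟨?_, hc⟩
    calc (1/2:ℝ) * (1/2)^m = (1/2)^(m+1) := by ring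
    _ < x := hl

def cfg (t m : ℕ) : ℕ → ℕ :=
  if t = 0 then fun i => if i = 2*m then 2^m else 0
  else if t = 1 then fun i => if i = 2*m+1 then 3 * 2^(m-1) else 0
  else if t = 2 then fun i => if i = 1 then 1 else if i = 2*m then 2^m / 3 else 0
  else fun i => if i = 1 then 1 else if i = 2*m+1 then 2^(m-1) else 0

def valid (J t m : ℕ) : Prop :=
  m < J ∧ (t = 0 ∨ (t = 1 ∧ 1 ≤ m) ∨ (t = 2 ∧ 2 ≤ m) ∨ (t = 3 ∧ 1 ≤ m))

lemma cfg_mem {J t m : ℕ} (h : valid J t m) : cfg t m ∈ KRED J := by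
  obtain ⟨hm, h0 | ⟨rfl, h1⟩ | ⟨rfl, h2⟩ | ⟨rfl, h3⟩⟩ := h
  · subst h0; exact Or.inl ⟨m, hm, by simp [cfg]⟩
  · exact Or.inr (Or.inl ⟨m, h1, hm, by simp [cfg]⟩)
  · exact Or.inr (Or.inr (Or.inl ⟨m, h2, hm, by simp [cfg]⟩))
  · exact Or.inr (Or.inr (Or.inr ⟨m, h3, hm, by simp [cfg]⟩))

lemma weight_single (R c j0 : ℕ) (Q : ℕ → ℕ) (hj : j0 < R) :
    ∑ j ∈ Finset.range R, (((if j = j0 then c else 0 : ℕ)) : ℝ) * (Q j : ℝ) = (c:ℝ) * Q j0 := by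
  have h : ∀ j ∈ Finset.range R,
      (((if j = j0 then c else 0 : ℕ)) : ℝ) * (Q j : ℝ) = if j = j0 then (c:ℝ) * Q j else 0 := by
    intro j _; by_cases h : j = j0 <;> simp [h]
  rw [Finset.sum_congr rfl h, Finset.sum_ite_eq' (Finset.range R) j0 (fun j => (c:ℝ) * Q j),
    if_pos (Finset.mem_range.2 hj)]

lemma weight_double (R c j0 : ℕ) (Q : ℕ → ℕ) (h1 : 1 < R) (hj : j0 < R) (hne : j0 ≠ 1) :
    ∑ j ∈ Finset.range R, (((if j = 1 then 1 else if j = j0 then c else 0 : ℕ)) : ℝ) * (Q j : ℝ)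
      = (Q 1 : ℝ) + (c:ℝ) * Q j0 := by
  have h : ∀ j ∈ Finset.range R,
      (((if j = 1 then 1 else if j = j0 then c else 0 : ℕ)) : ℝ) * (Q j : ℝ)
        = (if j = 1 then (Q j : ℝ) else 0) + (if j = j0 then (c:ℝ) * Q j else 0) := by
    intro j _
    by_cases hA : j = 1 <;> by_cases hB : j = j0
    · omega
    · subst hA; simp [if_neg (Ne.symm hne)]
    · subst hB; simp [hA, if_neg hne]
    · simp [hA, hB]
  rw [Finset.sum_congr rfl h, Finset.sum_add_distrib,
    Finset.sum_ite_eq' (Finset.range R) 1 (fun j => (Q j : ℝ)),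
    Finset.sum_ite_eq' (Finset.range R) j0 (fun j => (c:ℝ) * Q j),
    if_pos (Finset.mem_range.2 h1), if_pos (Finset.mem_range.2 hj)]

lemma pow_div_three (m : ℕ) (h : 2 ≤ m) : 2^m ≤ 4 * (2^m / 3) := by
  rcases Nat.lt_or_ge m 3 with h3 | h3
  · interval_cases m; decide
  · have h8 : 8 ≤ 2^m := by calc 8 = 2^3 := by norm_num
      _ ≤ 2^m := Nat.pow_le_pow_right (by norm_num) h3
    have hd := Nat.div_add_mod (2^m) 3
    have hr : 2^m % 3 < 3 := Nat.mod_lt _ (by norm_num)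
    omega

set_option maxHeartbeats 2000000 in
lemma key (J : ℕ) (hJ : 2 ≤ J) (n Q : ℕ → ℕ)
    (hC : ∑ j ∈ Finset.range (2*J), (n j : ℝ) * Ubd (j+1) < 1) :
    ∃ k ∈ KRED J, ∑ j ∈ Finset.range (2*J), (n j : ℝ) * (Q j : ℝ)
      ≤ (3/2) * ∑ j ∈ Finset.range (2*J), (k j : ℝ) * (Q j : ℝ) := by
  classical
  set s : Finset (ℕ × ℕ) :=
    (Finset.range 4 ×ˢ Finset.range J).filter (fun p => valid J p.1 p.2) with hs
  have hsne : s.Nonempty := ⟨(0,0), by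
    simp only [hs, Finset.mem_filter, Finset.mem_product, Finset.mem_range]
    exact ⟨⟨by omega, by omega⟩, by omega, Or.inl rfl⟩⟩
  obtain ⟨p, hp, hmax⟩ := Finset.exists_max_image s
    (fun p => ∑ j ∈ Finset.range (2*J), ((cfg p.1 p.2) j : ℝ) * (Q j : ℝ)) hsne
  have hpv : valid J p.1 p.2 := (Finset.mem_filter.1 hp).2
  refine ⟨cfg p.1 p.2, cfg_mem hpv, ?_⟩
  set M : ℝ := ∑ j ∈ Finset.range (2*J), ((cfg p.1 p.2) j : ℝ) * (Q j : ℝ) with hMdef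
  have hmax' : ∀ t m, valid J t m →
      ∑ j ∈ Finset.range (2*J), ((cfg t m) j : ℝ) * (Q j : ℝ) ≤ M := by
    intro t m hv
    have hmem : (t, m) ∈ s := by
      simp only [hs, Finset.mem_filter, Finset.mem_product, Finset.mem_range]
      exact ⟨⟨by rcases hv.2 with h|h|h|h <;> omega, hv.1⟩, hv⟩
    exact hmax (t, m) hmem
  -- the four basic bounds
  have HA : ∀ m, m < J → (2:ℝ)^m * Q (2*m) ≤ M := by
    intro m hm
    have h := hmax' 0 m ⟨hm, Or.inl rfl⟩
    have h2 : ∑ j ∈ Finset.range (2*J), ((cfg 0 m) j : ℝ) * (Q j : ℝ)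
        = ((2^m : ℕ) : ℝ) * Q (2*m) := by
      rw [← weight_single (2*J) (2^m) (2*m) Q (by omega)]
      exact Finset.sum_congr rfl (fun j _ => by simp [cfg])
    rw [h2] at h; push_cast at h; exact h
  have HB : ∀ m', m'+1 < J → 3 * (2:ℝ)^m' * Q (2*(m'+1)+1) ≤ M := by
    intro m' hm
    have h := hmax' 1 (m'+1) ⟨hm, Or.inr (Or.inl ⟨rfl, by omega⟩)⟩
    have h2 : ∑ j ∈ Finset.range (2*J), ((cfg 1 (m'+1)) j : ℝ) * (Q j : ℝ)
        = ((3 * 2^m' : ℕ) : ℝ) * Q (2*(m'+1)+1) := by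
      rw [← weight_single (2*J) (3 * 2^m') (2*(m'+1)+1) Q (by omega)]
      exact Finset.sum_congr rfl (fun j _ => by simp [cfg])
    rw [h2] at h; push_cast at h; linarith
  have HC : ∀ m, 2 ≤ m → m < J → (Q 1 : ℝ) + ((2^m/3 : ℕ) : ℝ) * Q (2*m) ≤ M := by
    intro m hm2 hm
    have h := hmax' 2 m ⟨hm, Or.inr (Or.inr (Or.inl ⟨rfl, hm2⟩))⟩
    have h2 : ∑ j ∈ Finset.range (2*J), ((cfg 2 m) j : ℝ) * (Q j : ℝ)
        = (Q 1 : ℝ) + ((2^m/3 : ℕ) : ℝ) * Q (2*m) := by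
      rw [← weight_double (2*J) (2^m/3) (2*m) Q (by omega) (by omega) (by omega)]
      exact Finset.sum_congr rfl (fun j _ => by simp [cfg])
    rwa [h2] at h
  have HD : ∀ m', m'+1 < J → (Q 1 : ℝ) + (2:ℝ)^m' * Q (2*(m'+1)+1) ≤ M := by
    intro m' hm
    have h := hmax' 3 (m'+1) ⟨hm, Or.inr (Or.inr (Or.inr ⟨rfl, by omega⟩))⟩
    have h2 : ∑ j ∈ Finset.range (2*J), ((cfg 3 (m'+1)) j : ℝ) * (Q j : ℝ)
        = (Q 1 : ℝ) + ((2^m' : ℕ) : ℝ) * Q (2*(m'+1)+1) := by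
      rw [← weight_double (2*J) (2^m') (2*(m'+1)+1) Q (by omega) (by omega) (by omega)]
      exact Finset.sum_congr rfl (fun j _ => by simp [cfg])
    rw [h2] at h; push_cast at h; linarith
  -- simple consequences
  have hQ0 : (Q 0 : ℝ) ≤ M := by have := HA 0 (by omega); norm_num at this; exact this
  have hM0 : (0:ℝ) ≤ M := le_trans (Nat.cast_nonneg _) hQ0
  have hQ1 : (Q 1 : ℝ) ≤ M := by
    have := HD 0 (by omega)
    have h3 : (0:ℝ) ≤ (2:ℝ)^0 * Q (2*(0+1)+1) := by positivity
    linarith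
  have hQ2 : 2 * (Q 2 : ℝ) ≤ M := by
    have := HA 1 (by omega); norm_num at this; linarith
  -- per-class bounds P3, P4
  have P3 : ∀ j, 2 ≤ j → j < 2*J → (Q j : ℝ) ≤ (3/2) * M * Ubd (j+1) := by
    intro j hj2 hjJ
    obtain ⟨m, hm | hm⟩ : ∃ m, j = 2*m ∨ j = 2*m+1 := ⟨j/2, by omega⟩
    · subst hm
      have hmJ : m < J := by omega
      have hU : Ubd (2*m+1) = 2/3 * (1/2)^m := by
        unfold Ubd
        rw [show (2*m+1) % 2 = 1 from by omega, show (2*m+1)/2 = m from by omega]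
        norm_num
      rw [hU]
      have hp : (0:ℝ) < (1/2)^m := by positivity
      have hid : (1/2:ℝ)^m * 2^m = 1 := by rw [← mul_pow]; norm_num
      have h2 := mul_le_mul_of_nonneg_left (HA m hmJ) hp.le
      calc (Q (2*m):ℝ) = ((1/2)^m * 2^m) * Q (2*m) := by rw [hid, one_mul]
      _ = (1/2)^m * ((2:ℝ)^m * Q (2*m)) := by ring
      _ ≤ (1/2)^m * M := h2
      _ = (3/2) * M * (2/3 * (1/2)^m) := by ring
    · subst hm
      obtain ⟨m', rfl⟩ : ∃ m', m = m'+1 := ⟨m-1, by omega⟩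
      have hmJ : m'+1 < J := by omega
      have hU : Ubd (2*(m'+1)+1+1) = (1/2)^(m'+2) := by
        unfold Ubd
        rw [show (2*(m'+1)+1+1) % 2 = 0 from by omega,
          show (2*(m'+1)+1+1)/2 = m'+2 from by omega]
        norm_num
      rw [hU]
      have hp : (0:ℝ) < (1/2)^m' := by positivity
      have hid : (1/2:ℝ)^m' * 2^m' = 1 := by rw [← mul_pow]; norm_num
      have h2 := mul_le_mul_of_nonneg_left (HB m' hmJ) hp.le
      have h3 : 3 * (Q (2*(m'+1)+1) : ℝ) ≤ (1/2)^m' * M := by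
        calc 3 * (Q (2*(m'+1)+1):ℝ)
            = ((1/2)^m' * 2^m') * (3 * Q (2*(m'+1)+1)) := by rw [hid, one_mul]
        _ = (1/2)^m' * (3 * (2:ℝ)^m' * Q (2*(m'+1)+1)) := by ring
        _ ≤ (1/2)^m' * M := h2
      have he : (1/2:ℝ)^(m'+2) = (1/2)^m' * (1/4) := by rw [pow_add]; norm_num
      rw [he]
      have hnn : 0 ≤ (1/2:ℝ)^m' * M := mul_nonneg hp.le hM0
      nlinarith [h3, hnn]
  have P4 : ∀ j, 3 ≤ j → j < 2*J → (Q j : ℝ) ≤ 6 * (M - Q 1) * Ubd (j+1) := by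
    intro j hj3 hjJ
    obtain ⟨m, hm | hm⟩ : ∃ m, j = 2*m ∨ j = 2*m+1 := ⟨j/2, by omega⟩
    · subst hm
      have hm2 : 2 ≤ m := by omega
      have hmJ : m < J := by omega
      have hU : Ubd (2*m+1) = 2/3 * (1/2)^m := by
        unfold Ubd
        rw [show (2*m+1) % 2 = 1 from by omega, show (2*m+1)/2 = m from by omega]
        norm_num
      rw [hU]
      have hp : (0:ℝ) < (1/2)^m := by positivity
      have hid : (1/2:ℝ)^m * 2^m = 1 := by rw [← mul_pow]; norm_num
      have hc4 : (2:ℝ)^m ≤ 4 * ((2^m/3 : ℕ):ℝ) := by exact_mod_cast pow_div_three m hm2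
      have hQnn : (0:ℝ) ≤ Q (2*m) := Nat.cast_nonneg _
      have h2 : (2:ℝ)^m * Q (2*m) ≤ 4 * (M - Q 1) := by
        have ha := mul_le_mul_of_nonneg_right hc4 hQnn
        have hb := HC m hm2 hmJ
        nlinarith [ha, hb]
      have h3 := mul_le_mul_of_nonneg_left h2 hp.le
      calc (Q (2*m):ℝ) = ((1/2)^m * 2^m) * Q (2*m) := by rw [hid, one_mul]
      _ = (1/2)^m * ((2:ℝ)^m * Q (2*m)) := by ring
      _ ≤ (1/2)^m * (4 * (M - Q 1)) := h3
      _ = 6 * (M - Q 1) * (2/3 * (1/2)^m) := by ring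
    · subst hm
      obtain ⟨m', rfl⟩ : ∃ m', m = m'+1 := ⟨m-1, by omega⟩
      have hmJ : m'+1 < J := by omega
      have hU : Ubd (2*(m'+1)+1+1) = (1/2)^(m'+2) := by
        unfold Ubd
        rw [show (2*(m'+1)+1+1) % 2 = 0 from by omega,
          show (2*(m'+1)+1+1)/2 = m'+2 from by omega]
        norm_num
      rw [hU]
      have hp : (0:ℝ) < (1/2)^m' := by positivity
      have hid : (1/2:ℝ)^m' * 2^m' = 1 := by rw [← mul_pow]; norm_num
      have h1 : (2:ℝ)^m' * Q (2*(m'+1)+1) ≤ M - Q 1 := by linarith [HD m' hmJ]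
      have h2 := mul_le_mul_of_nonneg_left h1 hp.le
      have h3 : (Q (2*(m'+1)+1) : ℝ) ≤ (1/2)^m' * (M - Q 1) := by
        calc (Q (2*(m'+1)+1):ℝ) = ((1/2)^m' * 2^m') * Q (2*(m'+1)+1) := by rw [hid, one_mul]
        _ = (1/2)^m' * ((2:ℝ)^m' * Q (2*(m'+1)+1)) := by ring
        _ ≤ (1/2)^m' * (M - Q 1) := h2
      have he : (1/2:ℝ)^(m'+2) = (1/2)^m' * (1/4) := by rw [pow_add]; norm_num
      rw [he]
      have hnn : 0 ≤ (1/2:ℝ)^m' * (M - Q 1) := mul_nonneg hp.le (by linarith)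
      nlinarith [h3, hnn]
  -- splitting of sums
  have hsplit : ∀ f : ℕ → ℝ, ∑ j ∈ Finset.range (2*J), f j
      = f 0 + f 1 + f 2 + ∑ j ∈ Finset.Ico 3 (2*J), f j := by
    intro f
    rw [Finset.range_eq_Ico, ← Finset.sum_Ico_consecutive f (by omega : 0 ≤ 3) (by omega : 3 ≤ 2*J)]
    have h03 : ∑ j ∈ Finset.Ico 0 3, f j = f 0 + f 1 + f 2 := by
      rw [← Finset.range_eq_Ico, Finset.sum_range_succ, Finset.sum_range_succ,
        Finset.sum_range_one]
    rw [h03]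
  set Sl : ℝ := ∑ j ∈ Finset.Ico 3 (2*J), (n j : ℝ) * Ubd (j+1) with hSl
  set SQ : ℝ := ∑ j ∈ Finset.Ico 3 (2*J), (n j : ℝ) * (Q j : ℝ) with hSQ
  have hSl0 : 0 ≤ Sl := Finset.sum_nonneg (fun j _ => mul_nonneg (Nat.cast_nonneg _) (Ubd_pos _).le)
  have hU1 : Ubd 1 = 2/3 := by norm_num [Ubd]
  have hU2 : Ubd 2 = 1/2 := by norm_num [Ubd]
  have hU3 : Ubd 3 = 1/3 := by norm_num [Ubd]
  have hC' : (n 0 : ℝ) * (2/3) + (n 1 : ℝ) * (1/2) + (n 2 : ℝ) * (1/3) + Sl < 1 := by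
    rw [hsplit (fun j => (n j : ℝ) * Ubd (j+1))] at hC
    rw [hU1, hU2, hU3] at hC
    exact hC
  rw [hsplit (fun j => (n j : ℝ) * (Q j : ℝ))]
  -- tail bounds
  have hT3 : SQ ≤ (3/2) * M * Sl := by
    rw [hSQ, hSl, Finset.mul_sum]
    apply Finset.sum_le_sum
    intro j hj
    rw [Finset.mem_Ico] at hj
    have := P3 j (by omega) hj.2
    have hn0 : (0:ℝ) ≤ (n j : ℝ) := Nat.cast_nonneg _
    calc (n j : ℝ) * Q j ≤ (n j : ℝ) * ((3/2) * M * Ubd (j+1)) :=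
      mul_le_mul_of_nonneg_left this hn0
    _ = (3/2) * M * ((n j : ℝ) * Ubd (j+1)) := by ring
  have hT4 : SQ ≤ 6 * (M - Q 1) * Sl := by
    rw [hSQ, hSl, Finset.mul_sum]
    apply Finset.sum_le_sum
    intro j hj
    rw [Finset.mem_Ico] at hj
    have := P4 j hj.1 hj.2
    have hn0 : (0:ℝ) ≤ (n j : ℝ) := Nat.cast_nonneg _
    calc (n j : ℝ) * Q j ≤ (n j : ℝ) * (6 * (M - Q 1) * Ubd (j+1)) :=
      mul_le_mul_of_nonneg_left this hn0
    _ = 6 * (M - Q 1) * ((n j : ℝ) * Ubd (j+1)) := by ring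
  -- integer case analysis on n 0, n 1, n 2
  have hcaseN : 4 * n 0 + 3 * n 1 + 2 * n 2 < 6 := by
    have hr : (4 * n 0 + 3 * n 1 + 2 * n 2 : ℝ) < 6 := by push_cast; linarith
    exact_mod_cast hr
  have h22 : (n 2 : ℝ) * Q 2 ≤ (3/2) * M * ((n 2 : ℝ) * (1/3)) := by
    have := P3 2 (le_refl 2) (by omega)
    rw [hU3] at this
    have hn0 : (0:ℝ) ≤ (n 2 : ℝ) := Nat.cast_nonneg _
    nlinarith [this, hn0]
  rcases (show n 0 = 0 ∧ n 1 = 0 ∨ (n 0 = 1 ∧ n 1 = 0 ∧ n 2 = 0)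
      ∨ (n 0 = 0 ∧ n 1 = 1 ∧ (n 2 = 0 ∨ n 2 = 1)) from by omega) with
    ⟨h0, h1⟩ | ⟨h0, h1, h2⟩ | ⟨h0, h1, h2⟩
  · -- case n0 = 0, n1 = 0
    rw [h0, h1] at hC' ⊢
    push_cast
    nlinarith [hT3, h22, hC', hM0, hSl0, (Nat.cast_nonneg (n 2) : (0:ℝ) ≤ (n 2 : ℝ))]
  · -- case n0 = 1
    rw [h0, h1, h2] at hC' ⊢
    push_cast
    push_cast at hC'
    nlinarith [hT3, hC', hM0, hSl0, hQ0]
  · -- case n1 = 1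
    rw [h0, h1] at hC' ⊢
    push_cast
    push_cast at hC'
    rcases h2 with h2 | h2 <;> rw [h2] at hC' ⊢ <;> push_cast at hC' ⊢
    · -- n2 = 0
      by_cases hq : (Q 1 : ℝ) ≤ (3/4) * M
      · nlinarith [hT3, hC', hM0, hSl0]
      · push_neg at hq
        nlinarith [hT4, hC', hQ1, hSl0, hq]
    · -- n2 = 1
      nlinarith [hT4, hC', hQ1, hQ2, hSl0]

lemma diag_le {N : ℕ} (P : Fin N → Prop) (a b : Fin N → ℕ) :
    (∑ i, if P i then a i * b i else 0)
      ≤ (∑ i, if P i then a i else 0) * (∑ i, if P i then b i else 0) := by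
  classical
  rw [Finset.sum_mul]
  apply Finset.sum_le_sum
  intro i _
  by_cases h : P i
  · simp only [if_pos h]
    refine Nat.mul_le_mul_left (a i) ?_
    have := Finset.single_le_sum (f := fun j => if P j then b j else 0)
      (fun _ _ => Nat.zero_le _) (Finset.mem_univ i)
    simpa [h] using this
  · simp [h]

/-- Proposition 1: for every refinement instance with job sizes in `(2⁻ᴶ, 1]` and every
feasible configuration `kX`, some reduced configuration has weight at least `(2/3)` of
the weight of `kX`. -/
theorem stmt0 (J : ℕ) (hJ : 2 ≤ J) (N : ℕ) (ξ : Fin N → ℝ)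
    (hξ : ∀ i, (1/2 : ℝ)^J < ξ i ∧ ξ i ≤ 1)
    (QX kX : Fin N → ℕ)
    (hfeas : ∑ i, (kX i : ℝ) * ξ i ≤ 1) :
    ∃ k ∈ KRED J,
      (2/3 : ℝ) * ∑ i, (kX i : ℝ) * (QX i : ℝ) ≤
        ∑ j ∈ Finset.range (2*J), (k j : ℝ) * (Qagg ξ QX j : ℝ) := by
  classical
  obtain ⟨jd, hjd1, hjd2⟩ :
      ∃ jd : Fin N → ℕ, (∀ i, jd i < 2*J) ∧ (∀ i, memI (jd i) (ξ i)) := by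
    have hcls : ∀ i, ∃ j, j < 2*J ∧ memI j (ξ i) :=
      fun i => exists_memI (hξ i).1 (hξ i).2
    choose jd h1 h2 using hcls
    exact ⟨jd, h1, h2⟩
  set n : ℕ → ℕ := fun j => ∑ i, if memI j (ξ i) then kX i else 0 with hn
  -- the capacity constraint for n
  have hB : ∑ j ∈ Finset.range (2*J), (n j : ℝ) * Ubd (j+1) < 1 := by
    have e1 : ∑ j ∈ Finset.range (2*J), (n j : ℝ) * Ubd (j+1)
        = ∑ i, (kX i : ℝ) * Ubd (jd i + 1) := by
      have e2 : ∀ j, (n j : ℝ) * Ubd (j+1)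
          = ∑ i, (if memI j (ξ i) then (kX i : ℝ) * Ubd (j+1) else 0) := by
        intro j
        rw [hn]
        push_cast
        rw [Finset.sum_mul]
        apply Finset.sum_congr rfl
        intro i _
        by_cases h : memI j (ξ i) <;> simp [h]
      calc ∑ j ∈ Finset.range (2*J), (n j : ℝ) * Ubd (j+1)
          = ∑ j ∈ Finset.range (2*J), ∑ i, (if memI j (ξ i) then (kX i : ℝ) * Ubd (j+1) else 0) :=
            Finset.sum_congr rfl (fun j _ => e2 j)
      _ = ∑ i, ∑ j ∈ Finset.range (2*J), (if memI j (ξ i) then (kX i : ℝ) * Ubd (j+1) else 0) :=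
            Finset.sum_comm
      _ = ∑ i, (kX i : ℝ) * Ubd (jd i + 1) := by
            apply Finset.sum_congr rfl
            intro i _
            rw [Finset.sum_eq_single (jd i)]
            · rw [if_pos (hjd2 i)]
            · intro j _ hne
              rw [if_neg]
              intro hmem
              exact hne (memI_unique hmem (hjd2 i))
            · intro h
              exact absurd (Finset.mem_range.2 (hjd1 i)) h
    rw [e1]
    by_cases hzero : ∀ i, kX i = 0
    · have : ∑ i, (kX i : ℝ) * Ubd (jd i + 1) = 0 := by
        apply Finset.sum_eq_zero
        intro i _
        rw [hzero i]
        simp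
      rw [this]; norm_num
    · push_neg at hzero
      obtain ⟨i0, hi0⟩ := hzero
      have hlt : ∑ i, (kX i : ℝ) * Ubd (jd i + 1) < ∑ i, (kX i : ℝ) * ξ i := by
        apply Finset.sum_lt_sum
        · intro i _
          exact mul_le_mul_of_nonneg_left (le_of_lt (memI_lb (hjd2 i))) (Nat.cast_nonneg _)
        · refine ⟨i0, Finset.mem_univ _, ?_⟩
          have hpos : (0:ℝ) < kX i0 := by
            have := Nat.pos_of_ne_zero hi0
            exact_mod_cast this
          exact mul_lt_mul_of_pos_left (memI_lb (hjd2 i0)) hpos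
      linarith
  obtain ⟨k, hk, hkey⟩ := key J hJ n (Qagg ξ QX) hB
  refine ⟨k, hk, ?_⟩
  -- weight comparison
  have hA : (∑ i, kX i * QX i) ≤ ∑ j ∈ Finset.range (2*J), n j * Qagg ξ QX j := by
    have e3 : ∀ i : Fin N,
        ∑ j ∈ Finset.range (2*J), (if memI j (ξ i) then kX i * QX i else 0) = kX i * QX i := by
      intro i
      rw [Finset.sum_eq_single (jd i)]
      · rw [if_pos (hjd2 i)]
      · intro j _ hne
        rw [if_neg]
        intro hmem
        exact hne (memI_unique hmem (hjd2 i))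
      · intro h
        exact absurd (Finset.mem_range.2 (hjd1 i)) h
    calc ∑ i, kX i * QX i
        = ∑ i, ∑ j ∈ Finset.range (2*J), (if memI j (ξ i) then kX i * QX i else 0) :=
          Finset.sum_congr rfl (fun i _ => (e3 i).symm)
    _ = ∑ j ∈ Finset.range (2*J), ∑ i, (if memI j (ξ i) then kX i * QX i else 0) :=
          Finset.sum_comm
    _ ≤ ∑ j ∈ Finset.range (2*J), n j * Qagg ξ QX j := by
          apply Finset.sum_le_sum
          intro j _
          exact diag_le (fun i => memI j (ξ i)) kX QX
  have hAr : (∑ i, (kX i : ℝ) * (QX i : ℝ))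
      ≤ ∑ j ∈ Finset.range (2*J), (n j : ℝ) * (Qagg ξ QX j : ℝ) := by
    have := hA
    push_cast at this ⊢
    exact_mod_cast this
  linarith
end

section
/- Fix an integer J ≥ 2. Let (ξ_1,…,ξ_N; Q^X_1,…,Q^X_N) be a refinement instance and k^X ∈ ℤ_{≥0}^N a feasible configuration with Σ_{i ∈ Z_1} k^X_i = 0. Then there exists k ∈ K_RED such that ⟨k, Q⟩ ≥ (2/3)·U, where U = Σ_{i=1}^N k^X_i Q^X_i. -/
attribute [local instance] Classical.propDecidable

-- aux: every x in (2^-J, 1] is in some class j < 2J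
lemma exists_class (J : ℕ) (x : ℝ) (h1 : (1/2:ℝ)^J < x) (h2 : x ≤ 1) :
    ∃ j < 2*J, memI j x := by
  have hex : ∃ n, ¬ x ≤ (1/2:ℝ)^n := ⟨J, not_le.mpr h1⟩
  classical
  have hm : ¬ x ≤ (1/2:ℝ)^(Nat.find hex) := Nat.find_spec hex
  have hmJ : Nat.find hex ≤ J := Nat.find_min' hex (not_le.mpr h1)
  have hm1 : 1 ≤ Nat.find hex := by
    by_contra h
    have h0 : Nat.find hex = 0 := by omega
    rw [h0] at hm; simp at hm; linarith
  obtain ⟨m', hmeq⟩ : ∃ m', Nat.find hex = m' + 1 := ⟨Nat.find hex - 1, by omega⟩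
  rw [hmeq] at hm hmJ
  have hup : x ≤ (1/2:ℝ)^m' := by
    by_contra h
    exact absurd (Nat.find_min hex (m := m') (by omega)) (by simpa using h)
  have hlow : (1/2:ℝ)*(1/2)^m' < x := by
    push_neg at hm
    calc (1/2:ℝ)*(1/2)^m' = (1/2)^(m'+1) := by ring
    _ < x := hm
  by_cases hc : (2/3:ℝ) * (1/2)^m' < x
  · refine ⟨2*m', by omega, ?_⟩
    unfold memI
    rw [if_pos (by omega : (2*m') % 2 = 0), (by omega : (2*m') / 2 = m')]
    exact ⟨hc, hup⟩
  · refine ⟨2*m'+1, by omega, ?_⟩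
    unfold memI
    rw [if_neg (by omega : ¬ (2*m'+1) % 2 = 0), (by omega : (2*m'+1) / 2 = m')]
    exact ⟨hlow, not_lt.mp hc⟩

/-- The multiplicity coefficient of the chosen reduced configuration. -/
def cRED (j : ℕ) : ℕ := if j % 2 = 0 then 2^(j/2) else 3 * 2^(j/2 - 1)

lemma one_le_cRED (j : ℕ) (hj : j ≠ 1) (x : ℝ) (hm : memI j x) :
    (1:ℝ) ≤ (3/2) * (cRED j : ℝ) * x := by
  unfold memI at hm
  unfold cRED
  rcases Nat.mod_two_eq_zero_or_one j with h2 | h2odd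
  ·
    rw [if_pos h2] at hm ⊢
    have hid : (2:ℝ)^(j/2) * (1/2)^(j/2) = 1 := by
      rw [← mul_pow]; norm_num
    have hpos : (0:ℝ) < 2^(j/2) := by positivity
    push_cast
    nlinarith [mul_lt_mul_of_pos_left hm.1 hpos]
  · have h2 : ¬ j % 2 = 0 := by omega
    rw [if_neg h2] at hm ⊢
    obtain ⟨m', hm'⟩ : ∃ m', j / 2 = m' + 1 := by
      refine ⟨j/2 - 1, ?_⟩
      have : j % 2 = 1 := by omega
      omega
    rw [hm'] at hm ⊢
    have hid : (2:ℝ)^m' * (1/2)^m' = 1 := by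
      rw [← mul_pow]; norm_num
    have hpos : (0:ℝ) < 2^m' := by positivity
    have hlow : (1/2:ℝ) * ((1/2)^m' * (1/2)) < x := by
      calc (1/2:ℝ) * ((1/2)^m' * (1/2)) = (1/2) * (1/2)^(m'+1) := by ring
      _ < x := hm.1
    have hsimp : (m' + 1 - 1) = m' := by omega
    rw [hsimp]
    push_cast
    nlinarith [mul_lt_mul_of_pos_left hlow hpos]


/-- Case 1 of Proposition 1: if the feasible configuration `kX` uses no job of a size in
`I 1 = (1/2, 2/3]`, some reduced configuration achieves at least `(2/3)` of its weight. -/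
theorem stmt2 (J : ℕ) (hJ : 2 ≤ J) (N : ℕ) (ξ : Fin N → ℝ)
    (hξ : ∀ i, (1/2 : ℝ)^J < ξ i ∧ ξ i ≤ 1)
    (QX kX : Fin N → ℕ)
    (hfeas : ∑ i, (kX i : ℝ) * ξ i ≤ 1)
    (hZ1 : (∑ i, if memI 1 (ξ i) then kX i else 0) = 0) :
    ∃ k ∈ KRED J,
      (2/3 : ℝ) * ∑ i, (kX i : ℝ) * (QX i : ℝ) ≤
        ∑ j ∈ Finset.range (2*J), (k j : ℝ) * (Qagg ξ QX j : ℝ) := by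
  classical
  set Q : ℕ → ℕ := Qagg ξ QX with hQdef
  set S : Finset ℕ := (Finset.range (2*J)).erase 1 with hS
  have hSne : S.Nonempty := ⟨0, by simp [hS]; omega⟩
  obtain ⟨j0, hj0S, hj0max⟩ := S.exists_max_image (fun j => cRED j * Q j) hSne
  have hj0lt : j0 < 2*J := Finset.mem_range.mp (Finset.mem_of_mem_erase hj0S)
  have hj0ne : j0 ≠ 1 := Finset.ne_of_mem_erase hj0S
  refine ⟨(fun i => if i = j0 then cRED j0 else 0), ?_, ?_⟩
  · -- membership in KRED
    unfold KRED
    rcases Nat.mod_two_eq_zero_or_one j0 with h2 | h2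
    · left
      refine ⟨j0/2, by omega, ?_⟩
      funext i
      have hc : cRED j0 = 2^(j0/2) := by unfold cRED; rw [if_pos h2]
      have hji : 2*(j0/2) = j0 := by omega
      rw [hji, hc]
    · right; left
      refine ⟨j0/2, by omega, by omega, ?_⟩
      funext i
      have hc : cRED j0 = 3 * 2^(j0/2 - 1) := by
        unfold cRED; rw [if_neg (by omega)]
      have hji : 2*(j0/2)+1 = j0 := by omega
      rw [hji, hc]
  · -- the weight inequality
    have hsum : ∑ j ∈ Finset.range (2*J),
        ((if j = j0 then cRED j0 else 0 : ℕ) : ℝ) * (Q j : ℝ)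
        = (cRED j0 : ℝ) * Q j0 := by
      rw [Finset.sum_eq_single_of_mem j0 (Finset.mem_range.mpr hj0lt)]
      · rw [if_pos rfl]
      · intro j _ hne
        rw [if_neg hne]; norm_num
    rw [hsum]
    set W : ℝ := (cRED j0 : ℝ) * Q j0 with hW
    have hW0 : (0:ℝ) ≤ W := by positivity
    have key : ∀ i : Fin N, (kX i : ℝ) * QX i ≤ (3/2) * W * ((kX i : ℝ) * ξ i) := by
      intro i
      have hxpos : (0:ℝ) < ξ i := lt_trans (by positivity) (hξ i).1
      obtain ⟨j, hjlt, hmem⟩ := exists_class J (ξ i) (hξ i).1 (hξ i).2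
      by_cases hj1 : j = 1
      · have hk0 : kX i = 0 := by
          have := (Finset.sum_eq_zero_iff.mp hZ1) i (Finset.mem_univ i)
          rwa [if_pos (hj1 ▸ hmem)] at this
        rw [hk0]
        push_cast
        rw [zero_mul, zero_mul, mul_zero]
      · have hQle : (QX i : ℝ) ≤ (Q j : ℝ) := by
          have : QX i ≤ Q j := by
            rw [hQdef]
            unfold Qagg
            calc QX i = if memI j (ξ i) then QX i else 0 := by rw [if_pos hmem]
            _ ≤ _ := Finset.single_le_sum (f := fun i' => if memI j (ξ i') then QX i' else 0)
                (fun _ _ => Nat.zero_le _) (Finset.mem_univ i)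
          exact_mod_cast this
        have hcQ : (cRED j : ℝ) * (Q j : ℝ) ≤ W := by
          have := hj0max j (Finset.mem_erase.mpr ⟨hj1, Finset.mem_range.mpr hjlt⟩)
          rw [hW]
          exact_mod_cast this
        have hx1 : (1:ℝ) ≤ (3/2) * (cRED j : ℝ) * ξ i := one_le_cRED j hj1 (ξ i) hmem
        have h1 : (kX i : ℝ) * QX i ≤ ((kX i : ℝ) * QX i) * ((3/2) * (cRED j) * ξ i) :=
          le_mul_of_one_le_right (by positivity) hx1
        have h2 : (cRED j : ℝ) * QX i ≤ W :=
          le_trans (mul_le_mul_of_nonneg_left hQle (by positivity)) hcQ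
        have h3 : (0:ℝ) ≤ (3/2) * ((kX i : ℝ) * ξ i) := by
          have : (0:ℝ) ≤ (kX i : ℝ) := by positivity
          nlinarith
        nlinarith [mul_le_mul_of_nonneg_left h2 h3]
    have hsum2 : ∑ i, (kX i : ℝ) * QX i ≤ (3/2) * W * ∑ i, (kX i : ℝ) * ξ i := by
      rw [Finset.mul_sum]
      exact Finset.sum_le_sum (fun i _ => key i)
    have hfin : (3/2) * W * ∑ i, (kX i : ℝ) * ξ i ≤ (3/2) * W := by
      nlinarith
    linarith
end

section
/- Fix an integer J ≥ 2. Let (ξ_1,…,ξ_N; Q^X_1,…,Q^X_N) be a refinement instance and k^X ∈ ℤ_{≥0}^N a feasible configuration with Σ_{i ∈ Z_1} k^X_i = 0, and set U = Σ_{i=1}^N k^X_i Q^X_i. Then at least one of the following inequalities holds: Q_{2m} ≥ (2U/3)·2^{-m} for some m ∈ {0, …, J−1}, or Q_{2m+1} ≥ (U/2)·2^{-m} for some m ∈ {1, …, J−1}. -/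
attribute [local instance] Classical.propDecidable

/-- The claim around equation (Q_U) in Case 1 of the proof of Proposition 1: if the feasible
configuration `kX` uses no job with size in `I 1`, then with `U = Σ_i kX_i QX_i`, either
`Q (2m) ≥ (2U/3)·2⁻ᵐ` for some `m ∈ {0,…,J-1}`, or `Q (2m+1) ≥ (U/2)·2⁻ᵐ` for some
`m ∈ {1,…,J-1}`. -/
theorem stmt3 (J : ℕ) (hJ : 2 ≤ J) (N : ℕ) (ξ : Fin N → ℝ)
    (hξ : ∀ i, (1/2 : ℝ)^J < ξ i ∧ ξ i ≤ 1)
    (QX kX : Fin N → ℕ)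
    (hfeas : ∑ i, (kX i : ℝ) * ξ i ≤ 1)
    (hZ1 : (∑ i, if memI 1 (ξ i) then kX i else 0) = 0)
    (U : ℝ) (hU : U = ∑ i, (kX i : ℝ) * (QX i : ℝ)) :
    (∃ m < J, 2*U/3 * (1/2)^m ≤ (Qagg ξ QX (2*m) : ℝ)) ∨
    (∃ m, 1 ≤ m ∧ m < J ∧ U/2 * (1/2)^m ≤ (Qagg ξ QX (2*m+1) : ℝ)) := by
  have hU0 : 0 ≤ U := hU ▸ Finset.sum_nonneg (fun i _ => by positivity)
  rcases eq_or_lt_of_le hU0 with hU0 | hU0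
  · left
    refine ⟨0, by omega, ?_⟩
    rw [← hU0]
    simpa using (Qagg ξ QX 0).cast_nonneg
  by_contra hcon
  push_neg at hcon
  obtain ⟨h1, h2⟩ := hcon
  have key : ∀ i, kX i ≠ 0 → (QX i : ℝ) < U * ξ i := by
    intro i hki
    obtain ⟨hlo, hhi⟩ := hξ i
    set P : ℕ → Prop := fun m => ξ i ≤ (1/2)^m with hP
    have hP0 : P 0 := by simpa [P] using hhi
    have hPJ : ¬ P J := not_le.mpr hlo
    set m := Nat.findGreatest P J with hm
    have hPm : P m := Nat.findGreatest_spec (Nat.zero_le J) hP0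
    have hmJ : m < J := lt_of_le_of_ne (Nat.findGreatest_le J) (fun h => hPJ (h ▸ hPm))
    have hPm1 : ¬ P (m+1) := Nat.findGreatest_is_greatest (Nat.lt_succ_self m) (by omega)
    have hlt2 : (1/2:ℝ) * (1/2)^m < ξ i := by
      have := not_le.mp hPm1
      calc (1/2:ℝ) * (1/2)^m = (1/2)^(m+1) := by ring
        _ < ξ i := this
    have hQle : ∀ j, memI j (ξ i) → (QX i : ℝ) ≤ Qagg ξ QX j := by
      intro j hj
      have : QX i ≤ Qagg ξ QX j := by
        unfold Qagg
        calc QX i = if memI j (ξ i) then QX i else 0 := by simp [hj]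
          _ ≤ ∑ i', if memI j (ξ i') then QX i' else 0 :=
            Finset.single_le_sum (f := fun i' => if memI j (ξ i') then QX i' else 0)
              (fun i' _ => Nat.zero_le _) (Finset.mem_univ i)
      exact_mod_cast this
    by_cases hsplit : (2/3) * (1/2:ℝ)^m < ξ i
    · have hmem : memI (2*m) (ξ i) := by
        simp only [memI, Nat.mul_mod_right, if_true, Nat.mul_div_cancel_left _ (by norm_num : 0 < 2)]
        exact ⟨hsplit, hPm⟩
      have hQ := h1 m hmJ
      calc (QX i : ℝ) ≤ Qagg ξ QX (2*m) := hQle _ hmem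
        _ < 2*U/3 * (1/2)^m := hQ
        _ = U * ((2/3) * (1/2)^m) := by ring
        _ < U * ξ i := by exact mul_lt_mul_of_pos_left hsplit hU0
    · push_neg at hsplit
      have hmem : memI (2*m+1) (ξ i) := by
        have h2m : (2*m+1) % 2 = 1 := by omega
        have h2d : (2*m+1) / 2 = m := by omega
        simp only [memI, h2m, h2d]
        norm_num
        exact ⟨hlt2, hsplit⟩
      have hm1 : 1 ≤ m := by
        by_contra hm0
        have : m = 0 := by omega
        have hmem1 : memI 1 (ξ i) := by
          simp only [this] at hmem; simpa using hmem
        have := (Finset.sum_eq_zero_iff).mp hZ1 i (Finset.mem_univ i)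
        simp [hmem1] at this
        exact hki this
      have hQ := h2 m hm1 hmJ
      calc (QX i : ℝ) ≤ Qagg ξ QX (2*m+1) := hQle _ hmem
        _ < U/2 * (1/2)^m := hQ
        _ = U * ((1/2) * (1/2)^m) := by ring
        _ < U * ξ i := by exact mul_lt_mul_of_pos_left hlt2 hU0
  have hex : ∃ i : Fin N, kX i ≠ 0 := by
    by_contra hall
    push_neg at hall
    rw [hU] at hU0
    simp [hall] at hU0
  obtain ⟨i0, hi0⟩ := hex
  have hlt : ∑ i, (kX i : ℝ) * (QX i : ℝ) < ∑ i, (kX i : ℝ) * (U * ξ i) := by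
    apply Finset.sum_lt_sum
    · intro i _
      by_cases h : kX i = 0
      · simp [h]
      · exact mul_le_mul_of_nonneg_left (key i h).le (by positivity)
    · refine ⟨i0, Finset.mem_univ i0, ?_⟩
      have hk : (0:ℝ) < kX i0 := by exact_mod_cast Nat.pos_of_ne_zero hi0
      exact mul_lt_mul_of_pos_left (key i0 hi0) hk
  have : ∑ i, (kX i : ℝ) * (U * ξ i) ≤ U := by
    calc ∑ i, (kX i : ℝ) * (U * ξ i) = U * ∑ i, (kX i : ℝ) * ξ i := by
          rw [Finset.mul_sum]; congr 1; ext i; ring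
      _ ≤ U * 1 := mul_le_mul_of_nonneg_left hfeas hU0.le
      _ = U := mul_one U
  linarith
end

section
/- Fix an integer J ≥ 2. Let (ξ_1,…,ξ_N; Q^X_1,…,Q^X_N) be a refinement instance and k^X ∈ ℤ_{≥0}^N a feasible configuration with Σ_{i ∈ Z_1} k^X_i = 1 and Σ_{i ∈ Z_2} k^X_i = 0. Set U = Σ_{i=1}^N k^X_i Q^X_i and U′ = U − Q_1, and suppose U/2 ≤ Q_1 < 2U/3. Then at least one of the following holds: Q_{2m} ≥ U′/(3·2^{m−2}) for some m ∈ {2, …, J−1}, or Q_{2m+1} ≥ U′/(3·2^{m−1}) for some m ∈ {1, …, J−1}. -/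
attribute [local instance] Classical.propDecidable

lemma memI_even (m : ℕ) (x : ℝ) :
    memI (2*m) x ↔ (2/3)*(1/2:ℝ)^m < x ∧ x ≤ (1/2:ℝ)^m := by
  have h1 : (2*m) % 2 = 0 := by omega
  have h2 : (2*m) / 2 = m := by omega
  simp [memI, h1, h2]

lemma memI_odd (m : ℕ) (x : ℝ) :
    memI (2*m+1) x ↔ (1/2)*(1/2:ℝ)^m < x ∧ x ≤ (2/3)*(1/2:ℝ)^m := by
  have h1 : (2*m+1) % 2 = 1 := by omega
  have h2 : (2*m+1) / 2 = m := by omega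
  simp [memI, h1, h2]

lemma memI_one (x : ℝ) : memI 1 x ↔ (1/2:ℝ) < x ∧ x ≤ 2/3 := by
  have := memI_odd 0 x
  norm_num at this
  simpa using this

lemma dyadic_mem (J : ℕ) (x : ℝ) (hx : (1/2:ℝ)^J < x) (hx1 : x ≤ 1) :
    ∃ m < J, (1/2:ℝ) * (1/2:ℝ)^m < x ∧ x ≤ (1/2:ℝ)^m := by
  induction J with
  | zero => norm_num at hx; linarith
  | succ J ih =>
    by_cases h : (1/2:ℝ)^J < x
    · obtain ⟨m, hm, h1, h2⟩ := ih h
      exact ⟨m, Nat.lt_succ_of_lt hm, h1, h2⟩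
    · push_neg at h
      refine ⟨J, Nat.lt_succ_self J, ?_, h⟩
      have he : (1/2:ℝ) * (1/2:ℝ)^J = (1/2:ℝ)^(J+1) := by ring
      rw [he]; exact hx

set_option maxHeartbeats 1000000 in
/-- The claim around equation (Q_Up) in Case 2.2 of the proof of Proposition 1: if `kX` is
feasible, uses exactly one job with size in `I 1` and none with size in `I 2`, and
`U/2 ≤ Q 1 < 2U/3`, then with `U′ = U − Q 1` either `Q (2m) ≥ U′/(3·2^{m-2})` for some
`m ∈ {2,…,J-1}`, or `Q (2m+1) ≥ U′/(3·2^{m-1})` for some `m ∈ {1,…,J-1}`. -/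
theorem stmt5 (J : ℕ) (hJ : 2 ≤ J) (N : ℕ) (ξ : Fin N → ℝ)
    (hξ : ∀ i, (1/2 : ℝ)^J < ξ i ∧ ξ i ≤ 1)
    (QX kX : Fin N → ℕ)
    (hfeas : ∑ i, (kX i : ℝ) * ξ i ≤ 1)
    (hZ1 : (∑ i, if memI 1 (ξ i) then kX i else 0) = 1)
    (hZ2 : (∑ i, if memI 2 (ξ i) then kX i else 0) = 0)
    (U U' : ℝ) (hU : U = ∑ i, (kX i : ℝ) * (QX i : ℝ))
    (hU' : U' = U - (Qagg ξ QX 1 : ℝ))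
    (hQ1lo : U/2 ≤ (Qagg ξ QX 1 : ℝ)) (hQ1hi : (Qagg ξ QX 1 : ℝ) < 2*U/3) :
    (∃ m, 2 ≤ m ∧ m < J ∧ U' / (3 * 2^(m-2)) ≤ (Qagg ξ QX (2*m) : ℝ)) ∨
    (∃ m, 1 ≤ m ∧ m < J ∧ U' / (3 * 2^(m-1)) ≤ (Qagg ξ QX (2*m+1) : ℝ)) := by
  by_contra hcon
  push_neg at hcon
  obtain ⟨heven, hodd⟩ := hcon
  have hU'pos : 0 < U' := by
    have hUpos : 0 < U := by linarith
    linarith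
  -- the unique Z₁ job
  have hex : ∃ i0, memI 1 (ξ i0) ∧ 1 ≤ kX i0 := by
    by_contra hno
    push_neg at hno
    have : (∑ i, if memI 1 (ξ i) then kX i else 0) = 0 := by
      apply Finset.sum_eq_zero
      intro i _
      split
      · next hm => have := hno i hm; omega
      · rfl
    omega
  obtain ⟨i0, hi0mem, hi0k⟩ := hex
  have hi0ξ : (1/2:ℝ) < ξ i0 ∧ ξ i0 ≤ 2/3 := (memI_one (ξ i0)).mp hi0mem
  have hξpos : ∀ i, 0 < ξ i := by
    intro i
    have := (hξ i).1
    have : (0:ℝ) < (1/2:ℝ)^J := by positivity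
    linarith [(hξ i).1]
  -- key per-job bound
  have key : ∀ i, ¬ memI 1 (ξ i) → (kX i : ℝ) * (QX i : ℝ) ≤ 2*U' * ((kX i : ℝ) * ξ i) := by
    intro i hiZ1
    rcases Nat.eq_zero_or_pos (kX i) with hk0 | hk1
    · simp [hk0]
    have hkR : (1:ℝ) ≤ (kX i : ℝ) := by exact_mod_cast hk1
    obtain ⟨m, hmJ, hlo, hhi⟩ := dyadic_mem J (ξ i) (hξ i).1 (hξ i).2
    have hQle : ∀ j, memI j (ξ i) → (QX i : ℝ) ≤ (Qagg ξ QX j : ℝ) := by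
      intro j hj
      have : QX i ≤ Qagg ξ QX j := by
        have := Finset.single_le_sum
          (f := fun i' => if memI j (ξ i') then QX i' else 0)
          (fun _ _ => Nat.zero_le _) (Finset.mem_univ i)
        simpa [Qagg, hj] using this
      exact_mod_cast this
    by_cases hev : (2/3:ℝ)*(1/2:ℝ)^m < ξ i
    · -- even interval I (2m)
      have hmemE : memI (2*m) (ξ i) := (memI_even m (ξ i)).mpr ⟨hev, hhi⟩
      rcases m with _ | _ | m''
      ·
        -- ξ i > 2/3 : infeasible together with the Z₁ job
        exfalso
        have hne : i0 ≠ i := fun h => hiZ1 (h ▸ hi0mem)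
        have hpair : (kX i0 : ℝ) * ξ i0 + (kX i : ℝ) * ξ i ≤ 1 := by
          have hsub : ({i0, i} : Finset (Fin N)) ⊆ Finset.univ := Finset.subset_univ _
          have hs := Finset.sum_le_sum_of_subset_of_nonneg
            (f := fun j => (kX j : ℝ) * ξ j) hsub
            (fun j _ _ => mul_nonneg (Nat.cast_nonneg _) (le_of_lt (hξpos j)))
          rw [Finset.sum_pair hne] at hs
          linarith
        have h0 : (2/3:ℝ) < ξ i := by simpa using hev
        have hk0R : (1:ℝ) * (1/2:ℝ) ≤ (kX i0 : ℝ) * ξ i0 := by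
          apply mul_le_mul
          · exact_mod_cast hi0k
          · linarith [hi0ξ.1]
          · norm_num
          · positivity
        have hkiR : (1:ℝ) * (2/3:ℝ) ≤ (kX i : ℝ) * ξ i := by
          apply mul_le_mul hkR (le_of_lt h0) (by norm_num) (by positivity)
        linarith
      · -- interval I 2 : kX i = 0, contradiction
        exfalso
        have := (Finset.sum_eq_zero_iff.mp hZ2) i (Finset.mem_univ i)
        rw [if_pos] at this
        · omega
        · simpa using hmemE
      · have hq := heven (m''+2) (by omega) hmJ
        have hsub : (m''+2) - 2 = m'' := by omega
        rw [hsub] at hq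
        have hQ : (QX i : ℝ) ≤ (Qagg ξ QX (2*(m''+2)) : ℝ) := hQle _ hmemE
        have ht : (0:ℝ) < (2:ℝ)^m'' := by positivity
        have hqx : (QX i : ℝ) * (3 * (2:ℝ)^m'') < U' := by
          have : (QX i : ℝ) < U' / (3 * (2:ℝ)^m'') := lt_of_le_of_lt hQ hq
          rw [lt_div_iff₀ (by positivity)] at this
          linarith
        -- ξ i > (2/3)*(1/2)^(m''+2) = 1/(6*2^m'')
        have hxl : 1 < 6 * (2:ℝ)^m'' * ξ i := by
          have he : (2/3:ℝ)*(1/2:ℝ)^(m''+2) * (6 * (2:ℝ)^m'') = 1 := by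
            rw [div_pow, one_pow]
            field_simp
            ring
          nlinarith [mul_pos ht (hξpos i)]
        have hQ0 : (0:ℝ) ≤ (QX i : ℝ) := Nat.cast_nonneg _
        have hgoal : (QX i : ℝ) ≤ 2 * U' * ξ i := by
          have p1 : (QX i : ℝ) * (3 * (2:ℝ)^m'') * ξ i < U' * ξ i :=
            mul_lt_mul_of_pos_right hqx (hξpos i)
          have p2 : (QX i : ℝ) * 1 ≤ (QX i : ℝ) * (6 * (2:ℝ)^m'' * ξ i) :=
            mul_le_mul_of_nonneg_left (le_of_lt hxl) hQ0
          have p3 : (0:ℝ) ≤ U' * ξ i := mul_nonneg (le_of_lt hU'pos) (le_of_lt (hξpos i))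
          nlinarith [p1, p2, p3]
        calc (kX i : ℝ) * (QX i : ℝ) ≤ (kX i : ℝ) * (2 * U' * ξ i) :=
              mul_le_mul_of_nonneg_left hgoal (Nat.cast_nonneg _)
          _ = 2*U' * ((kX i : ℝ) * ξ i) := by ring
    · -- odd interval I (2m+1)
      push_neg at hev
      have hmemO : memI (2*m+1) (ξ i) := (memI_odd m (ξ i)).mpr ⟨hlo, hev⟩
      rcases m with _ | m'
      · exact absurd (by simpa using hmemO) hiZ1
      · have hq := hodd (m'+1) (by omega) hmJ
        have hsub : (m'+1) - 1 = m' := by omega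
        rw [hsub] at hq
        have hQ : (QX i : ℝ) ≤ (Qagg ξ QX (2*(m'+1)+1) : ℝ) := hQle _ hmemO
        have ht : (0:ℝ) < (2:ℝ)^m' := by positivity
        have hqx : (QX i : ℝ) * (3 * (2:ℝ)^m') < U' := by
          have : (QX i : ℝ) < U' / (3 * (2:ℝ)^m') := lt_of_le_of_lt hQ hq
          rw [lt_div_iff₀ (by positivity)] at this
          linarith
        -- ξ i > (1/2)*(1/2)^(m'+1) = 1/(4*2^m')
        have hxl : 1 < 4 * (2:ℝ)^m' * ξ i := by
          have he : (1/2:ℝ)*(1/2:ℝ)^(m'+1) * (4 * (2:ℝ)^m') = 1 := by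
            rw [div_pow, one_pow]
            field_simp
            ring
          nlinarith [mul_pos ht (hξpos i)]
        have hQ0 : (0:ℝ) ≤ (QX i : ℝ) := Nat.cast_nonneg _
        have hgoal : (QX i : ℝ) ≤ 2 * U' * ξ i := by
          have p1 : (QX i : ℝ) * (3 * (2:ℝ)^m') * ξ i < U' * ξ i :=
            mul_lt_mul_of_pos_right hqx (hξpos i)
          have p2 : (QX i : ℝ) * 1 ≤ (QX i : ℝ) * (4 * (2:ℝ)^m' * ξ i) :=
            mul_le_mul_of_nonneg_left (le_of_lt hxl) hQ0
          have p3 : (0:ℝ) ≤ U' * ξ i := mul_nonneg (le_of_lt hU'pos) (le_of_lt (hξpos i))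
          nlinarith [p1, p2, p3]
        calc (kX i : ℝ) * (QX i : ℝ) ≤ (kX i : ℝ) * (2 * U' * ξ i) :=
              mul_le_mul_of_nonneg_left hgoal (Nat.cast_nonneg _)
          _ = 2*U' * ((kX i : ℝ) * ξ i) := by ring
  -- split the sums at Z₁
  set R : ℝ := ∑ i, if memI 1 (ξ i) then 0 else (kX i : ℝ) * (QX i : ℝ) with hR
  set S : ℝ := ∑ i, if memI 1 (ξ i) then 0 else (kX i : ℝ) * ξ i with hS
  -- Step 1 : U' ≤ R
  have hsplitU : U = (∑ i, if memI 1 (ξ i) then (kX i : ℝ) * (QX i : ℝ) else 0) + R := by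
    rw [hU, hR, ← Finset.sum_add_distrib]
    apply Finset.sum_congr rfl
    intro i _
    split <;> ring
  have hZ1sum : (∑ i, if memI 1 (ξ i) then (kX i : ℝ) * (QX i : ℝ) else 0)
      ≤ (Qagg ξ QX 1 : ℝ) := by
    have hQcast : (Qagg ξ QX 1 : ℝ) = ∑ i, if memI 1 (ξ i) then (QX i : ℝ) else 0 := by
      rw [Qagg]
      push_cast
      rfl
    rw [hQcast]
    apply Finset.sum_le_sum
    intro i _
    split
    · next hm =>
      have hk1 : kX i ≤ 1 := by
        have h1 := Finset.single_le_sum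
          (f := fun i' => if memI 1 (ξ i') then kX i' else 0)
          (fun _ _ => Nat.zero_le _) (Finset.mem_univ i)
        rw [hZ1] at h1
        simpa [hm] using h1
      have : (kX i : ℝ) ≤ 1 := by exact_mod_cast hk1
      nlinarith [show (0:ℝ) ≤ (QX i : ℝ) from Nat.cast_nonneg _]
    · exact le_rfl
  have hstep1 : U' ≤ R := by
    rw [hU']
    linarith [hsplitU, hZ1sum]
  -- Step 2 : R ≤ 2U' * S
  have hstep2 : R ≤ 2*U' * S := by
    rw [hR, hS, Finset.mul_sum]
    apply Finset.sum_le_sum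
    intro i _
    split
    · next => simp
    · next hm => exact key i hm
  -- Step 3 : S ≤ 1 - ξ i0
  have hstep3 : S ≤ 1 - ξ i0 := by
    have hsplit : (∑ i, (kX i : ℝ) * ξ i)
        = (∑ i, if memI 1 (ξ i) then (kX i : ℝ) * ξ i else 0) + S := by
      rw [hS, ← Finset.sum_add_distrib]
      apply Finset.sum_congr rfl
      intro i _
      split <;> ring
    have hlb : ξ i0 ≤ ∑ i, if memI 1 (ξ i) then (kX i : ℝ) * ξ i else 0 := by
      have this := Finset.single_le_sum
        (f := fun i => if memI 1 (ξ i) then (kX i : ℝ) * ξ i else 0)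
        (fun i _ => by
          by_cases h : memI 1 (ξ i)
          · simp only [if_pos h]
            exact mul_nonneg (Nat.cast_nonneg _) (le_of_lt (hξpos i))
          · simp [h])
        (Finset.mem_univ i0)
      simp only [if_pos hi0mem] at this
      have h1 : (1:ℝ) * ξ i0 ≤ (kX i0 : ℝ) * ξ i0 := by
        apply mul_le_mul_of_nonneg_right _ (le_of_lt (hξpos i0))
        exact_mod_cast hi0k
      linarith
    have hfeas' := hfeas
    rw [hsplit] at hfeas'
    linarith
  -- conclude
  have hfin : 2*U' * S ≤ 2*U' * (1 - ξ i0) :=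
    mul_le_mul_of_nonneg_left hstep3 (by positivity)
  nlinarith [hi0ξ.1]
end

section
/- Fix an integer J ≥ 2. Let (ξ_1,…,ξ_N; Q^X_1,…,Q^X_N) be a refinement instance and k^X ∈ ℤ_{≥0}^N a feasible configuration with Σ_{i ∈ Z_1} k^X_i = 1. Set U = Σ_{i=1}^N k^X_i Q^X_i and suppose Q_1 < U/2. Then at least one of the following holds: Q_{2m} ≥ (2U/3)·2^{-m} for some m ∈ {1, …, J−1}, or Q_{2m+1} ≥ (U/2)·2^{-m} for some m ∈ {1, …, J−1}. -/
attribute [local instance] Classical.propDecidable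

lemma QX_le_Qagg {N : ℕ} (ξ : Fin N → ℝ) (QX : Fin N → ℕ) (j : ℕ) (i : Fin N)
    (h : memI j (ξ i)) : QX i ≤ Qagg ξ QX j := by
  classical
  have := Finset.single_le_sum (f := fun i => if memI j (ξ i) then QX i else 0)
    (fun i _ => Nat.zero_le _) (Finset.mem_univ i)
  simpa [Qagg, h] using this

set_option maxHeartbeats 1600000 in
/-- Case 2.3 in the appendix proof of Proposition 1: if `kX` is feasible, uses exactly one
job with size in `I 1`, and `Q 1 < U/2`, then either `Q (2m) ≥ (2U/3)·2⁻ᵐ` for some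
`m ∈ {1,…,J-1}`, or `Q (2m+1) ≥ (U/2)·2⁻ᵐ` for some `m ∈ {1,…,J-1}`. -/
theorem stmt8 (J : ℕ) (hJ : 2 ≤ J) (N : ℕ) (ξ : Fin N → ℝ)
    (hξ : ∀ i, (1/2 : ℝ)^J < ξ i ∧ ξ i ≤ 1)
    (QX kX : Fin N → ℕ)
    (hfeas : ∑ i, (kX i : ℝ) * ξ i ≤ 1)
    (hZ1 : (∑ i, if memI 1 (ξ i) then kX i else 0) = 1)
    (U : ℝ) (hU : U = ∑ i, (kX i : ℝ) * (QX i : ℝ))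
    (hQ1 : (Qagg ξ QX 1 : ℝ) < U/2) :
    (∃ m, 1 ≤ m ∧ m < J ∧ 2*U/3 * (1/2)^m ≤ (Qagg ξ QX (2*m) : ℝ)) ∨
    (∃ m, 1 ≤ m ∧ m < J ∧ U/2 * (1/2)^m ≤ (Qagg ξ QX (2*m+1) : ℝ)) := by
  classical
  by_contra hcon
  push_neg at hcon
  obtain ⟨heven, hodd⟩ := hcon
  have hξpos : ∀ i, (0:ℝ) < ξ i := fun i =>
    lt_trans (pow_pos (by norm_num) J) (hξ i).1
  -- U > 0
  have hU0 : 0 < U := by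
    have : (0:ℝ) ≤ (Qagg ξ QX 1 : ℝ) := Nat.cast_nonneg _
    linarith
  -- the unique I₁ job
  have hi1 : ∃ i1, memI 1 (ξ i1) ∧ 1 ≤ kX i1 := by
    by_contra hc
    push_neg at hc
    have : (∑ i, if memI 1 (ξ i) then kX i else 0) = 0 :=
      Finset.sum_eq_zero (fun i _ => by
        by_cases h : memI 1 (ξ i)
        · have := hc i h; simp [h]; omega
        · simp [h])
    omega
  obtain ⟨i1, hi1mem, hi1k⟩ := hi1
  have hi1half : (1/2 : ℝ) < ξ i1 := by
    have := hi1mem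
    simp [memI] at this
    linarith [this.1]
  -- every i in Z₁ has kX i ≤ 1
  have hkle1 : ∀ i, memI 1 (ξ i) → kX i ≤ 1 := by
    intro i hi
    have := Finset.single_le_sum (f := fun i => if memI 1 (ξ i) then kX i else 0)
      (fun i _ => Nat.zero_le _) (Finset.mem_univ i)
    rw [hZ1] at this
    simpa [hi] using this
  -- key pointwise bound
  have hkey : ∀ i, ¬ memI 1 (ξ i) → 1 ≤ kX i → (QX i : ℝ) ≤ U * ξ i := by
    intro i hnot hki
    have hξi := hξ i
    -- find minimal m with (1/2)^(m+1) < ξ i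
    have hP : ∃ m, (1/2:ℝ)^(m+1) < ξ i := by
      refine ⟨J - 1, ?_⟩
      have hJ1 : J - 1 + 1 = J := by omega
      rw [hJ1]; exact hξi.1
    set m := Nat.find hP with hm_def
    have hmlt : (1/2:ℝ)^(m+1) < ξ i := Nat.find_spec hP
    have hmle : ξ i ≤ (1/2:ℝ)^m := by
      rcases Nat.eq_zero_or_pos m with h0 | hpos
      · rw [h0, pow_zero]; exact hξi.2
      · have hk : m - 1 < m := by omega
        have := Nat.find_min hP hk
        have hkk : m - 1 + 1 = m := by omega
        rw [hkk] at this
        linarith [not_lt.mp this]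
    have hmJ : m < J := by
      by_contra hc
      push_neg at hc
      have : (1/2:ℝ)^m ≤ (1/2)^J := pow_le_pow_of_le_one (by norm_num) (by norm_num) hc
      linarith [hξi.1]
    rcases Nat.eq_zero_or_pos m with h0 | hm1
    · -- m = 0: ξ i > 1/2; since not in I₁, ξ i > 2/3, but then infeasible
      rw [h0] at hmlt hmle
      have h23 : (2/3:ℝ) < ξ i := by
        by_contra hc
        push_neg at hc
        apply hnot
        unfold memI
        rw [if_neg (by omega : ¬ (1 % 2 = 0))]
        norm_num
        constructor <;> [linarith [hmlt]; linarith]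
      -- feasibility contradiction
      exfalso
      have hne : i ≠ i1 := by
        intro h
        have := hi1mem
        simp [memI] at this
        rw [h] at h23
        linarith [this.2]
      have hnn : ∀ j ∈ Finset.univ \ ({i, i1} : Finset (Fin N)),
          (0:ℝ) ≤ (kX j : ℝ) * ξ j := fun j _ =>
        mul_nonneg (Nat.cast_nonneg _) (le_of_lt (hξpos j))
      have hsub : ({i, i1} : Finset (Fin N)) ⊆ Finset.univ := Finset.subset_univ _
      have hpair := Finset.sum_le_sum_of_subset_of_nonneg
        (f := fun j => (kX j : ℝ) * ξ j) hsub
        (fun j _ hj => mul_nonneg (Nat.cast_nonneg _) (le_of_lt (hξpos j)))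
      rw [Finset.sum_pair hne] at hpair
      have hki' : (1:ℝ) ≤ (kX i : ℝ) := by exact_mod_cast hki
      have hki1' : (1:ℝ) ≤ (kX i1 : ℝ) := by exact_mod_cast hi1k
      nlinarith [hξpos i, hξpos i1, hpair, hfeas]
    · -- m ≥ 1
      by_cases hc : (2/3:ℝ) * (1/2)^m < ξ i
      · -- even interval 2m
        have hmem : memI (2*m) (ξ i) := by
          unfold memI
          rw [if_pos (by omega : (2*m) % 2 = 0), (by omega : (2*m)/2 = m)]
          exact ⟨hc, hmle⟩
        have hle := QX_le_Qagg ξ QX (2*m) i hmem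
        have hle' : (QX i : ℝ) ≤ (Qagg ξ QX (2*m) : ℝ) := by exact_mod_cast hle
        have hsm := heven m hm1 hmJ
        have : (QX i : ℝ) < 2*U/3 * (1/2)^m := lt_of_le_of_lt hle' hsm
        nlinarith [hU0, this, hc]
      · -- odd interval 2m+1
        push_neg at hc
        have hmem : memI (2*m+1) (ξ i) := by
          unfold memI
          rw [if_neg (by omega : ¬ ((2*m+1) % 2 = 0)), (by omega : (2*m+1)/2 = m)]
          constructor
          · calc (1/2:ℝ) * (1/2)^m = (1/2)^(m+1) := by ring
              _ < ξ i := hmlt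
          · exact hc
        have hle := QX_le_Qagg ξ QX (2*m+1) i hmem
        have hle' : (QX i : ℝ) ≤ (Qagg ξ QX (2*m+1) : ℝ) := by exact_mod_cast hle
        have hsm := hodd m hm1 hmJ
        have hlt : (QX i : ℝ) < U/2 * (1/2)^m := lt_of_le_of_lt hle' hsm
        have hlb : (1/2:ℝ) * (1/2)^m < ξ i := by
          calc (1/2:ℝ) * (1/2)^m = (1/2)^(m+1) := by ring
            _ < ξ i := hmlt
        nlinarith [hU0, hlt, hlb]
  -- split the sum
  have hsplit : U = (∑ i, if memI 1 (ξ i) then (kX i:ℝ)*(QX i:ℝ) else 0)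
      + (∑ i, if memI 1 (ξ i) then 0 else (kX i:ℝ)*(QX i:ℝ)) := by
    rw [hU, ← Finset.sum_add_distrib]
    exact Finset.sum_congr rfl (fun i _ => by by_cases h : memI 1 (ξ i) <;> simp [h])
  -- bound A : first sum ≤ Q₁
  have hQcast : (Qagg ξ QX 1 : ℝ) = ∑ i, if memI 1 (ξ i) then (QX i:ℝ) else 0 := by
    rw [Qagg, Nat.cast_sum]
    exact Finset.sum_congr rfl (fun i _ => by by_cases h : memI 1 (ξ i) <;> simp [h])
  have hA : (∑ i, if memI 1 (ξ i) then (kX i:ℝ)*(QX i:ℝ) else 0)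
      ≤ (Qagg ξ QX 1 : ℝ) := by
    rw [hQcast]
    apply Finset.sum_le_sum
    intro i _
    by_cases h : memI 1 (ξ i)
    · simp only [h, if_true]
      have hk := hkle1 i h
      have hk' : (kX i : ℝ) ≤ 1 := by exact_mod_cast hk
      have hq0 : (0:ℝ) ≤ (QX i : ℝ) := Nat.cast_nonneg _
      have hk0 : (0:ℝ) ≤ (kX i : ℝ) := Nat.cast_nonneg _
      nlinarith [hq0, hk0, hk']
    · simp [h]
  -- bound B : second sum ≤ U * (non-I₁ size sum)
  have hB : (∑ i, if memI 1 (ξ i) then 0 else (kX i:ℝ)*(QX i:ℝ))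
      ≤ U * (∑ i, if memI 1 (ξ i) then 0 else (kX i:ℝ)*(ξ i)) := by
    rw [Finset.mul_sum]
    apply Finset.sum_le_sum
    intro i _
    by_cases h : memI 1 (ξ i)
    · simp [h]
    · simp only [h, if_false]
      rcases Nat.eq_zero_or_pos (kX i) with h0 | h1
      · simp [h0]
      · have := hkey i h h1
        have hk0 : (0:ℝ) ≤ (kX i : ℝ) := Nat.cast_nonneg _
        nlinarith
  -- bound C : non-I₁ size sum < 1/2
  have hC : (∑ i, if memI 1 (ξ i) then 0 else (kX i:ℝ)*(ξ i)) < 1/2 := by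
    have hsplit2 : (∑ i, (kX i:ℝ) * ξ i)
        = (∑ i, if memI 1 (ξ i) then (kX i:ℝ)*(ξ i) else 0)
        + (∑ i, if memI 1 (ξ i) then 0 else (kX i:ℝ)*(ξ i)) := by
      rw [← Finset.sum_add_distrib]
      exact Finset.sum_congr rfl (fun i _ => by by_cases h : memI 1 (ξ i) <;> simp [h])
    have hterm : ξ i1 ≤ ∑ i, if memI 1 (ξ i) then (kX i:ℝ)*(ξ i) else 0 := by
      have hsingle := Finset.single_le_sum
        (f := fun i => if memI 1 (ξ i) then (kX i:ℝ)*(ξ i) else 0)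
        (fun i _ => by
          by_cases h : memI 1 (ξ i)
          · simp only [h, if_true]
            exact mul_nonneg (Nat.cast_nonneg _) (le_of_lt (hξpos i))
          · simp [h])
        (Finset.mem_univ i1)
      have hki1' : (1:ℝ) ≤ (kX i1 : ℝ) := by exact_mod_cast hi1k
      have : ξ i1 ≤ (kX i1:ℝ) * ξ i1 := by nlinarith [hξpos i1]
      simp only [hi1mem, if_true] at hsingle
      linarith
    have hle1 : (∑ i, if memI 1 (ξ i) then (kX i:ℝ)*(ξ i) else 0)
        + (∑ i, if memI 1 (ξ i) then 0 else (kX i:ℝ)*(ξ i)) ≤ 1 := by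
      rw [← hsplit2]; exact hfeas
    linarith [hi1half, hterm, hle1]
  -- non-I₁ size sum is nonnegative
  have hCnn : (0:ℝ) ≤ (∑ i, if memI 1 (ξ i) then 0 else (kX i:ℝ)*(ξ i)) :=
    Finset.sum_nonneg (fun i _ => by
      by_cases h : memI 1 (ξ i)
      · simp [h]
      · simp only [h, if_false]
        exact mul_nonneg (Nat.cast_nonneg _) (le_of_lt (hξpos i)))
  -- combine
  have hfin : U * (∑ i, if memI 1 (ξ i) then 0 else (kX i:ℝ)*(ξ i)) < U * (1/2) :=
    mul_lt_mul_of_pos_left hC hU0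
  linarith [hsplit, hA, hB, hQ1, hfin]
end

section
/- Fix integers J ≥ 2 and L ≥ 1, and reals γ ∈ (0, 1] and ε ∈ (0, 1). Let Q ∈ ℝ_{≥0}^{2J}, let ρ ∈ ℝ_{≥0}^{2J}, let x lie in the convex hull of K_RED (viewed as a subset of ℝ^{2J}), and suppose ρ_j ≤ (1 − ε)·γ·L·x_j for every j. Let k^{(1)}, …, k^{(L)} ∈ ℝ_{≥0}^{2J} satisfy ⟨k^{(ℓ)}, Q⟩ ≥ γ · max_{k ∈ K_RED} ⟨k, Q⟩ for each ℓ. Then ⟨ρ, Q⟩ − Σ_{ℓ=1}^{L} ⟨k^{(ℓ)}, Q⟩ ≤ −(ε·γ·L/√(2J)) · ‖Q‖₂. -/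
/-- The deterministic core of the drift lemma in the proof of Theorem 3: if the workload
vector `ρ` is componentwise below `(1−ε)·γ·L·x` for some `x` in the convex hull of `K_RED`,
and each server's schedule `k ℓ` has weight at least `γ` times the maximum weight over
`K_RED`, then `⟨ρ, Q⟩ − Σ_ℓ ⟨k ℓ, Q⟩ ≤ −(εγL/√(2J))·‖Q‖₂`. -/
theorem stmt14 (J L : ℕ) (hJ : 2 ≤ J) (hL : 1 ≤ L) (γ ε : ℝ)
    (hγ0 : 0 < γ) (hγ1 : γ ≤ 1) (hε0 : 0 < ε) (hε1 : ε < 1)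
    (Q ρ x : ℕ → ℝ)
    (hQ : ∀ j < 2*J, 0 ≤ Q j) (hρ : ∀ j < 2*J, 0 ≤ ρ j)
    (hx : x ∈ convexHull ℝ ((fun k : ℕ → ℕ => fun j => (k j : ℝ)) '' KRED J))
    (hρx : ∀ j < 2*J, ρ j ≤ (1 - ε) * γ * L * x j)
    (k : Fin L → ℕ → ℝ)
    (hk : ∀ ℓ, ∀ j < 2*J, 0 ≤ k ℓ j)
    (hkw : ∀ ℓ, ∀ k' ∈ KRED J,
      γ * ∑ j ∈ Finset.range (2*J), (k' j : ℝ) * Q j ≤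
        ∑ j ∈ Finset.range (2*J), k ℓ j * Q j) :
    (∑ j ∈ Finset.range (2*J), ρ j * Q j) -
        (∑ ℓ, ∑ j ∈ Finset.range (2*J), k ℓ j * Q j) ≤
      -(ε * γ * L / Real.sqrt (2*J)) *
        Real.sqrt (∑ j ∈ Finset.range (2*J), Q j ^ 2) := by
  set S := Finset.range (2*J) with hS
  have h2J : (0:ℝ) < 2*(J:ℝ) := by
    have : (0:ℝ) < (J:ℝ) := by exact_mod_cast Nat.lt_of_lt_of_le Nat.zero_lt_two hJ
    linarith
  have hs : 0 < Real.sqrt (2*(J:ℝ)) := Real.sqrt_pos.mpr h2J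
  set N := Real.sqrt (∑ j ∈ S, Q j ^ 2) with hN
  -- key: each coordinate is dominated
  have key : ∀ j < 2*J, ∀ ℓ : Fin L, γ * Q j ≤ ∑ j' ∈ S, k ℓ j' * Q j' := by
    intro j hj ℓ
    obtain ⟨k', hk', hk'j⟩ : ∃ k' ∈ KRED J, 1 ≤ k' j := by
      rcases Nat.even_or_odd j with ⟨m, hm⟩ | ⟨m, hm⟩
      · refine ⟨_, Or.inl ⟨m, by omega, rfl⟩, ?_⟩
        have : j = 2*m := by omega
        simp only [this, if_pos rfl]
        exact Nat.one_le_two_pow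
      · cases m with
        | zero =>
          refine ⟨_, Or.inr (Or.inr (Or.inr ⟨1, le_refl 1, by omega, rfl⟩)), ?_⟩
          have : j = 1 := by omega
          simp [this]
        | succ n =>
          refine ⟨_, Or.inr (Or.inl ⟨n+1, by omega, by omega, rfl⟩), ?_⟩
          have hj1 : j = 2*(n+1)+1 := by omega
          have h0 : 1 ≤ 2^(n+1-1) := Nat.one_le_two_pow
          rw [hj1, if_pos rfl]
          omega
    have hc : (1:ℝ) ≤ (k' j : ℝ) := by exact_mod_cast hk'j
    calc γ * Q j ≤ γ * ((k' j : ℝ) * Q j) :=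
          mul_le_mul_of_nonneg_left (le_mul_of_one_le_left (hQ j hj) hc) hγ0.le
      _ ≤ γ * ∑ j' ∈ S, (k' j' : ℝ) * Q j' := by
          apply mul_le_mul_of_nonneg_left _ hγ0.le
          exact Finset.single_le_sum (f := fun i => (k' i : ℝ) * Q i)
            (fun i hi => mul_nonneg (by positivity) (hQ i (Finset.mem_range.mp hi)))
            (Finset.mem_range.mpr hj)
      _ ≤ _ := hkw ℓ k' hk'
  -- convex hull bound
  have hT : ∀ ℓ : Fin L, γ * ∑ j ∈ S, x j * Q j ≤ ∑ j ∈ S, k ℓ j * Q j := by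
    intro ℓ
    set K : ℝ := ∑ j ∈ S, k ℓ j * Q j with hK
    have hC : Convex ℝ {y : ℕ → ℝ | γ * ∑ j ∈ S, y j * Q j ≤ K} := by
      intro y hy z hz a b ha hb hab
      simp only [Set.mem_setOf_eq] at hy hz ⊢
      have hsum : ∑ j ∈ S, (a • y + b • z) j * Q j
          = a * ∑ j ∈ S, y j * Q j + b * ∑ j ∈ S, z j * Q j := by
        rw [Finset.mul_sum, Finset.mul_sum, ← Finset.sum_add_distrib]
        apply Finset.sum_congr rfl
        intro i _
        simp [Pi.add_apply, Pi.smul_apply, smul_eq_mul]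
        ring
      rw [hsum]
      have h1 := mul_le_mul_of_nonneg_left hy ha
      have h2 := mul_le_mul_of_nonneg_left hz hb
      have hab' : a*K + b*K = K := by rw [← add_mul, hab, one_mul]
      nlinarith [h1, h2]
    have hsub : ((fun k : ℕ → ℕ => fun j => (k j : ℝ)) '' KRED J)
        ⊆ {y : ℕ → ℝ | γ * ∑ j ∈ S, y j * Q j ≤ K} := by
      rintro y ⟨k', hk', rfl⟩
      exact hkw ℓ k' hk'
    exact convexHull_min hsub hC hx
  -- each server's weight dominates γ N / √(2J)
  have hnorm : ∀ ℓ : Fin L, γ * N ≤ Real.sqrt (2*(J:ℝ)) * ∑ j ∈ S, k ℓ j * Q j := by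
    intro ℓ
    set K : ℝ := ∑ j ∈ S, k ℓ j * Q j with hK
    have hKpos : 0 ≤ K := le_trans (mul_nonneg hγ0.le (hQ 0 (by omega))) (key 0 (by omega) ℓ)
    have h5 : γ^2 * ∑ j ∈ S, Q j ^ 2 ≤ (2*(J:ℝ)) * K^2 := by
      rw [Finset.mul_sum]
      calc ∑ j ∈ S, γ^2 * Q j ^ 2 ≤ ∑ j ∈ S, K^2 := by
            apply Finset.sum_le_sum
            intro j hj
            have hj' := Finset.mem_range.mp hj
            have h1 := key j hj' ℓ
            have h2 := hQ j hj'
            nlinarith [mul_nonneg hγ0.le h2]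
        _ = (2*(J:ℝ)) * K^2 := by
            rw [Finset.sum_const, hS, Finset.card_range, nsmul_eq_mul]
            push_cast; ring
    have h6 := Real.sqrt_le_sqrt h5
    rw [Real.sqrt_mul (sq_nonneg γ), Real.sqrt_sq hγ0.le,
        Real.sqrt_mul h2J.le, Real.sqrt_sq hKpos] at h6
    exact h6
  -- assemble
  set A : ℝ := ∑ j ∈ S, ρ j * Q j with hA
  set X : ℝ := ∑ j ∈ S, x j * Q j with hX
  set T : ℝ := ∑ ℓ : Fin L, ∑ j ∈ S, k ℓ j * Q j with hTsum
  have h1 : A ≤ (1 - ε) * γ * L * X := by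
    rw [hA, hX, Finset.mul_sum]
    apply Finset.sum_le_sum
    intro j hj
    have hj' := Finset.mem_range.mp hj
    have := mul_le_mul_of_nonneg_right (hρx j hj') (hQ j hj')
    nlinarith [this]
  have h2 : (L:ℝ) * (γ * X) ≤ T := by
    rw [hTsum]
    calc (L:ℝ) * (γ * X) = ∑ _ℓ : Fin L, γ * X := by
          rw [Finset.sum_const, Finset.card_univ, Fintype.card_fin, nsmul_eq_mul]
      _ ≤ _ := Finset.sum_le_sum (fun ℓ _ => hT ℓ)
  have h3 : (L:ℝ) * (γ * N) ≤ Real.sqrt (2*(J:ℝ)) * T := by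
    rw [hTsum, Finset.mul_sum]
    calc (L:ℝ) * (γ * N) = ∑ _ℓ : Fin L, γ * N := by
          rw [Finset.sum_const, Finset.card_univ, Fintype.card_fin, nsmul_eq_mul]
      _ ≤ _ := Finset.sum_le_sum (fun ℓ _ => hnorm ℓ)
  have hAT : A ≤ (1 - ε) * T := by
    nlinarith [mul_le_mul_of_nonneg_left h2 (by linarith : (0:ℝ) ≤ 1 - ε)]
  have hgoal : (A - T) * Real.sqrt (2*(J:ℝ)) ≤ -(ε * γ * L * N) := by
    have p1 : (A - T) * Real.sqrt (2*(J:ℝ)) ≤ (-ε * T) * Real.sqrt (2*(J:ℝ)) :=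
      mul_le_mul_of_nonneg_right (by linarith) hs.le
    have p2 : ε * ((L:ℝ) * (γ * N)) ≤ ε * (Real.sqrt (2*(J:ℝ)) * T) :=
      mul_le_mul_of_nonneg_left h3 hε0.le
    nlinarith [p1, p2]
  have hcast : Real.sqrt (2*(J:ℝ)) = Real.sqrt ((2:ℝ)*J) := by norm_num
  rw [show -(ε * γ * (L:ℝ) / Real.sqrt (2*(J:ℝ))) * N = (-(ε * γ * L * N)) / Real.sqrt (2*(J:ℝ)) from by ring,
      le_div_iff₀ hs]
  linarith [hgoal]
end
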